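/- Let r, K, v* be measurable on Ω with r ≥ 0, K > 0, v* ≥ 0, and K = γP + δQ with γ, δ > 0, P, Q > 0 measurable. Suppose ∫_Ω r v* (1 - v*/K) dx = 0, ∫_Ω (r/K)(v* - K)² dx > 0, and ∫_Ω r Q (v*/K - 1) dx > 0. Then ∫_Ω r P (1 - v*/K) dx > 0, and consequently c* := (∫_Ω P r v*/K dx)/(∫_Ω r P dx) < 1. -/

import Mathlib

/-!
Since `K = γ P + δ Q`, the logistic integrand splits pointwise as
`r v (1 - v/K) = -(r/K)(v - K)² + γ r P (1 - v/K) - δ r Q (v/K - 1)`.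
Integrating, the left side vanishes while the quadratic and `Q` terms are positive, so
`γ ∫ r P (1 - v/K) > 0`; and `∫ r P (1 - v/K) = ∫ r P - ∫ P r v/K` is exactly `c* < 1`.
-/

open MeasureTheory

theorem logistic_integrand_split {r v K P Q γ δ : ℝ} (hK : K ≠ 0) (hKPQ : K = γ * P + δ * Q) :
    γ * (r * P * (1 - v / K)) =
      r * v * (1 - v / K) + r / K * (v - K) ^ 2 + δ * (r * Q * (v / K - 1)) := by
  field_simp
  linear_combination (r * (v - K)) * hKPQ

theorem gamma_mul_integral_P_term_eq {Ω : Type*} [MeasurableSpace Ω] {μ : Measure Ω}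
    {r K P Q v : Ω → ℝ} {γ δ : ℝ} (hK : ∀ x, K x ≠ 0) (hKPQ : ∀ x, K x = γ * P x + δ * Q x)
    (hlog : Integrable (fun x => r x * v x * (1 - v x / K x)) μ)
    (hquad : Integrable (fun x => r x / K x * (v x - K x) ^ 2) μ)
    (hQ : Integrable (fun x => r x * Q x * (v x / K x - 1)) μ) :
    γ * ∫ x, r x * P x * (1 - v x / K x) ∂μ =
      (∫ x, r x * v x * (1 - v x / K x) ∂μ) + (∫ x, r x / K x * (v x - K x) ^ 2 ∂μ) +
        δ * ∫ x, r x * Q x * (v x / K x - 1) ∂μ := by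
  have hsum : Integrable (fun x => r x * v x * (1 - v x / K x) + r x / K x * (v x - K x) ^ 2) μ :=
    hlog.add hquad
  rw [← integral_const_mul, ← integral_const_mul, ← integral_add hlog hquad,
    ← integral_add hsum (hQ.const_mul δ)]
  exact integral_congr_ae (.of_forall fun x => logistic_integrand_split (hK x) (hKPQ x))

theorem P_term_pos_and_cstar_lt_one_general {Ω : Type*} [MeasureSpace Ω]
    (r K P Q vstar : Ω → ℝ) (γ δ : ℝ) (hγ : 0 < γ) (hδ : 0 < δ)
    (hK : ∀ x, 0 < K x)
    (hKPQ : ∀ x, K x = γ * P x + δ * Q x)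
    (hint0 : Integrable (fun x => r x * vstar x * (1 - vstar x / K x)))
    (hint1 : Integrable (fun x => (r x / K x) * (vstar x - K x) ^ 2))
    (hint3 : Integrable (fun x => r x * Q x * (vstar x / K x - 1)))
    (hint4 : Integrable (fun x => r x * P x))
    (hint5 : Integrable (fun x => P x * r x * (vstar x / K x)))
    (hrPpos : 0 < ∫ x, r x * P x)
    (hzero : (∫ x, r x * vstar x * (1 - vstar x / K x)) = 0)
    (hquad : 0 < ∫ x, (r x / K x) * (vstar x - K x) ^ 2)
    (hQterm : 0 < ∫ x, r x * Q x * (vstar x / K x - 1)) :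
    (0 < ∫ x, r x * P x * (1 - vstar x / K x)) ∧
      (∫ x, P x * r x * (vstar x / K x)) / (∫ x, r x * P x) < 1 := by
  have hidentity := gamma_mul_integral_P_term_eq (fun x => (hK x).ne') hKPQ hint0 hint1 hint3
  have hPterm : 0 < ∫ x, r x * P x * (1 - vstar x / K x) := by
    refine pos_of_mul_pos_right (a := γ) ?_ hγ.le
    rw [hidentity, hzero]
    linarith [mul_pos hδ hQterm]
  have hcstar : (∫ x, r x * P x * (1 - vstar x / K x)) =
      (∫ x, r x * P x) - ∫ x, P x * r x * (vstar x / K x) := by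
    rw [← integral_sub hint4 hint5]
    exact integral_congr_ae (.of_forall fun x => by ring)
  refine ⟨hPterm, ?_⟩
  rw [div_lt_one hrPpos]
  linarith

/-- Key computation of Lemma 8: the `P`-term is positive and hence the harvesting
threshold `c* = (∫ P r v*/K)/(∫ r P)` is less than one. -/
theorem P_term_pos_and_cstar_lt_one {Ω : Type*} [MeasureSpace Ω]
    (r K P Q vstar : Ω → ℝ) (γ δ : ℝ) (hγ : 0 < γ) (hδ : 0 < δ)
    (hrm : Measurable r) (hKm : Measurable K) (hPm : Measurable P)
    (hQm : Measurable Q) (hvm : Measurable vstar)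
    (hr : ∀ x, 0 ≤ r x) (hK : ∀ x, 0 < K x) (hP : ∀ x, 0 < P x) (hQpos : ∀ x, 0 < Q x)
    (hv : ∀ x, 0 ≤ vstar x)
    (hKPQ : ∀ x, K x = γ * P x + δ * Q x)
    (hint0 : Integrable (fun x => r x * vstar x * (1 - vstar x / K x)))
    (hint1 : Integrable (fun x => (r x / K x) * (vstar x - K x) ^ 2))
    (hint2 : Integrable (fun x => r x * P x * (1 - vstar x / K x)))
    (hint3 : Integrable (fun x => r x * Q x * (vstar x / K x - 1)))
    (hint4 : Integrable (fun x => r x * P x))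
    (hint5 : Integrable (fun x => P x * r x * (vstar x / K x)))
    (hrPpos : 0 < ∫ x, r x * P x)
    (hzero : (∫ x, r x * vstar x * (1 - vstar x / K x)) = 0)
    (hquad : 0 < ∫ x, (r x / K x) * (vstar x - K x) ^ 2)
    (hQterm : 0 < ∫ x, r x * Q x * (vstar x / K x - 1)) :
    (0 < ∫ x, r x * P x * (1 - vstar x / K x)) ∧
      (∫ x, P x * r x * (vstar x / K x)) / (∫ x, r x * P x) < 1 :=
  P_term_pos_and_cstar_lt_one_general r K P Q vstar γ δ hγ hδ hK hKPQ hint0 hint1 hint3 hint4 hint5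
    hrPpos hzero hquad hQterm
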